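/- Let {X_n} be the standard random walk on the Manhattan lattice started at (0,0), and set Y_n = φ(X_{2n}) with φ(x¹,x²) = (⌊x¹/2⌋,⌊x²/2⌋). If with probability 1, Y_n = (0,0) for infinitely many n, then with probability 1, X_m = (0,0) for infinitely many m. -/

import Mathlib

open MeasureTheory ProbabilityTheory

/-- `ε j = 1` if `j` is even, `-1` if `j` is odd. -/
def epsZ (j : ℤ) : ℤ := if Even j then 1 else -1

/-- Block-collapsing map `φ(x¹,x²) = (⌊x¹/2⌋, ⌊x²/2⌋)` (floor division). -/
def phiZ (x : ℤ × ℤ) : ℤ × ℤ := (Int.fdiv x.1 2, Int.fdiv x.2 2)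

/-- The Manhattan step selected by a Boolean coin: `true` moves horizontally,
`false` moves vertically. -/
def manhattanStepFun (x : ℤ × ℤ) (b : Bool) : ℤ × ℤ :=
  if b then (x.1 + epsZ x.2, x.2) else (x.1, x.2 + epsZ x.1)

/-!
At even times `x¹ + x²` is even, so `φ(X_{2n}) = (0,0)` forces `X_{2n} ∈ {(0,0), (1,1)}`, and
from `(1,1)` the coins `T, T, F, T` lead back to the origin. These coins are independent of the
past, so whenever `Y_n = (0,0)` the conditional probability of a visit to the origin after any
fixed time `m` is at least `1/16`. By Lévy's upward theorem these conditional probabilities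
converge a.s. to the indicator of that visit, so on the event `Y_n = (0,0)` infinitely often the
origin is visited after every time `m`.
-/

open Filter

lemma odd_epsZ (j : ℤ) : Odd (epsZ j) := by
  unfold epsZ; split <;> decide

lemma even_manhattanStepFun_iff (x : ℤ × ℤ) (b : Bool) :
    Even ((manhattanStepFun x b).1 + (manhattanStepFun x b).2) ↔ ¬Even (x.1 + x.2) := by
  have h₁ := Int.not_even_iff_odd.2 (odd_epsZ x.1)
  have h₂ := Int.not_even_iff_odd.2 (odd_epsZ x.2)
  cases b <;> simp only [manhattanStepFun, Bool.false_eq_true, if_false, if_true] <;>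
    simp only [add_right_comm x.1, ← add_assoc, Int.even_add] <;> tauto

section ManhattanPath

variable {x : ℕ → ℤ × ℤ} {c : ℕ → Bool} (hstep : ∀ n, x (n + 1) = manhattanStepFun (x n) (c n))
include hstep

lemma even_manhattanPath_iff (h0 : x 0 = (0, 0)) (n : ℕ) :
    Even ((x n).1 + (x n).2) ↔ Even n := by
  induction n with
  | zero => simp [h0]
  | succ n ih => rw [hstep, even_manhattanStepFun_iff, ih, Nat.even_add_one]

lemma manhattanPath_add_four_eq_zero {n : ℕ} (hx : x n = (1, 1)) (h₀ : c n = true)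
    (h₁ : c (n + 1) = true) (h₂ : c (n + 2) = false) (h₃ : c (n + 3) = true) :
    x (n + 4) = (0, 0) := by
  rw [hstep, hstep, hstep, hstep, hx, h₀, h₁, h₂, h₃]
  decide

end ManhattanPath

lemma eq_zero_or_eq_one_one_of_phiZ_eq_zero {x : ℤ × ℤ} (hφ : phiZ x = (0, 0))
    (hx : Even (x.1 + x.2)) : x = (0, 0) ∨ x = (1, 1) := by
  obtain ⟨a, b⟩ := x
  simp only [phiZ, Prod.mk.injEq, Int.fdiv_eq_ediv_of_nonneg _ zero_le_two] at hφ ⊢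
  rw [Int.even_iff] at hx
  omega

section Probability

variable {Ω : Type*} {m0 : MeasurableSpace Ω} {μ : Measure Ω}

lemma ae_mem_of_frequently_le_condExp_indicator [IsFiniteMeasure μ] {ℱ : Filtration ℕ m0}
    {B : Set Ω} (hB : MeasurableSet[⨆ n, ℱ n] B) {δ : ℝ} (hδ : 0 < δ) :
    ∀ᵐ ω ∂μ, (∃ᶠ n in atTop, δ ≤ μ[B.indicator 1 | ℱ n] ω) → ω ∈ B := by
  have hlevy := ((integrable_const (1 : ℝ)).indicator ((iSup_le ℱ.le) B hB)).tendsto_ae_condExp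
    (μ := μ) (stronglyMeasurable_const.indicator hB)
  filter_upwards [hlevy] with ω hω hfreq
  by_contra hωB
  rw [Set.indicator_of_notMem hωB] at hω
  obtain ⟨n, hδn, hnδ⟩ := (hfreq.and_eventually (hω.eventually_lt_const hδ)).exists
  exact hδn.not_gt hnδ

lemma measureReal_le_condExp_indicator [IsFiniteMeasure μ] {m m' : MeasurableSpace Ω}
    (hm : m ≤ m0) (hm' : m' ≤ m0) (hind : Indep m' m μ) {G P B : Set Ω}
    (hG : MeasurableSet[m] G) (hP : MeasurableSet[m'] P) (hB : MeasurableSet[m0] B)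
    (hsub : G ∩ P ⊆ B) :
    ∀ᵐ ω ∂μ, ω ∈ G → μ.real P ≤ μ[B.indicator 1 | m] ω := by
  have hPint : Integrable (P.indicator (1 : Ω → ℝ)) μ :=
    (integrable_const 1).indicator (hm' P hP)
  have hmono : μ[(G ∩ P).indicator 1 | m] ≤ᵐ[μ] μ[B.indicator (1 : Ω → ℝ) | m] :=
    condExp_mono ((integrable_const 1).indicator ((hm G hG).inter (hm' P hP)))
      ((integrable_const 1).indicator hB)
      (ae_of_all _ (Set.indicator_le_indicator_of_subset hsub fun _ => zero_le_one))
  have hpull :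
      μ[(G ∩ P).indicator 1 | m] =ᵐ[μ] G.indicator (μ[P.indicator (1 : Ω → ℝ) | m]) := by
    rw [← Set.indicator_indicator]
    exact condExp_indicator hPint hG
  have hindep : μ[P.indicator (1 : Ω → ℝ) | m] =ᵐ[μ] fun _ => μ.real P := by
    simpa [integral_indicator_one (hm' P hP)] using
      condExp_indep_eq hm' hm ((stronglyMeasurable_one (α := Ω) (β := ℝ)).indicator hP) hind
  filter_upwards [hmono, hpull, hindep] with ω h₁ h₂ h₃ hωG
  rwa [h₂, Set.indicator_of_mem hωG, h₃] at h₁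

def pastFiltration {β : Type*} [mβ : MeasurableSpace β]
    (f : ℕ → Ω → β) (hf : ∀ i, Measurable (f i)) : Filtration ℕ m0 where
  seq n := ⨆ i ∈ Set.Iio n, mβ.comap (f i)
  mono' _ _ hnm := biSup_mono fun _ hi => lt_of_lt_of_le hi hnm
  le' _ := iSup₂_le fun i _ => (hf i).comap_le

lemma measure_biInter_preimage_coins [IsProbabilityMeasure μ] {C : ℕ → Ω → Bool}
    (hC : ∀ n, Measurable (C n)) (hCindep : iIndepFun C μ)
    (hCfair : ∀ n, μ {ω | C n ω = true} = 2⁻¹) (S : Finset ℕ) (b : ℕ → Bool) :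
    μ (⋂ i ∈ S, C i ⁻¹' {b i}) = 2⁻¹ ^ S.card := by
  have hhalf : ∀ i, μ (C i ⁻¹' {b i}) = 2⁻¹ := fun i => by
    cases b i with
    | true => exact hCfair i
    | false =>
      rw [show ({false} : Set Bool) = {true}ᶜ by ext; simp, Set.preimage_compl,
        prob_compl_eq_one_sub (hC i (measurableSet_singleton true))]
      rw [show C i ⁻¹' {true} = {ω | C i ω = true} from rfl, hCfair i, ENNReal.one_sub_inv_two]
  rw [hCindep.measure_inter_preimage_eq_mul S fun _ _ => measurableSet_singleton _,
    Finset.prod_congr rfl fun i _ => hhalf i, Finset.prod_const]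

end Probability

section ManhattanWalk

variable {Ω : Type*} {m0 : MeasurableSpace Ω} {μ : Measure Ω}
  {C : ℕ → Ω → Bool} {X : ℕ → Ω → ℤ × ℤ}
  (hC : ∀ n, Measurable (C n)) (hX0 : ∀ ω, X 0 ω = (0, 0))
  (hXrec : ∀ n ω, X (n + 1) ω = manhattanStepFun (X n ω) (C n ω))
include hC hX0 hXrec

lemma measurable_pastFiltration_manhattan (k : ℕ) :
    Measurable[pastFiltration C hC k] (X k) := by
  induction k with
  | zero => rw [funext hX0]; exact measurable_const
  | succ k ih =>
    have hCk : Measurable[pastFiltration C hC (k + 1)] (C k) :=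
      Measurable.of_comap_le
        (le_iSup₂ (f := fun i (_ : i ∈ Set.Iio (k + 1)) => MeasurableSpace.comap (C i) _) k
          k.lt_succ_self)
    rw [funext (hXrec k)]
    exact (measurable_of_countable (Function.uncurry manhattanStepFun)).comp
      ((ih.mono ((pastFiltration C hC).mono k.le_succ) le_rfl).prodMk hCk)

lemma measurableSet_exists_ge_eq_zero (m : ℕ) :
    MeasurableSet[⨆ n, pastFiltration C hC n] {ω | ∃ j ≥ m, X j ω = (0, 0)} := by
  have hunion : {ω | ∃ j ≥ m, X j ω = (0, 0)} = ⋃ j ≥ m, X j ⁻¹' {(0, 0)} := by ext; simp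
  rw [hunion]
  exact MeasurableSet.iUnion fun j => MeasurableSet.iUnion fun _ =>
    le_iSup (pastFiltration C hC) j _
      (measurable_pastFiltration_manhattan hC hX0 hXrec j (measurableSet_singleton _))

lemma inv_sixteen_le_condExp_indicator_visit [IsProbabilityMeasure μ] (hCindep : iIndepFun C μ)
    (hCfair : ∀ n, μ {ω | C n ω = true} = 2⁻¹) {m k : ℕ} (hmk : m ≤ k) (hk : Even k) :
    ∀ᵐ ω ∂μ, phiZ (X k ω) = (0, 0) →
      (16⁻¹ : ℝ) ≤ μ[{ω | ∃ j ≥ m, X j ω = (0, 0)}.indicator 1 | pastFiltration C hC k] ω := by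
  -- the coins `T, T, F, T` at times `k, …, k + 3`
  set P := ⋂ i ∈ Finset.Ico k (k + 4), C i ⁻¹' {decide (i ≠ k + 2)}
  set S : Set ℕ := ↑(Finset.Ico k (k + 4))
  have hP : MeasurableSet[⨆ i ∈ S, MeasurableSpace.comap (C i) _] P :=
    Finset.measurableSet_biInter _ fun i hi => (measurableSet_singleton _).preimage
      (Measurable.of_comap_le
        (le_iSup₂ (f := fun i (_ : i ∈ S) => MeasurableSpace.comap (C i) _) i hi))
  have hPreal : μ.real P = 16⁻¹ := by
    rw [measureReal_def, measure_biInter_preimage_coins hC hCindep hCfair, Nat.card_Ico]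
    norm_num [ENNReal.toReal_inv]
  have hind := indep_iSup_of_disjoint (fun i => (hC i).comap_le) hCindep.iIndep
    (S := S) (T := Set.Iio k) (Set.disjoint_left.2 fun i hi hi' => by
      simp only [S, Finset.coe_Ico, Set.mem_Ico, Set.mem_Iio] at hi hi'; omega)
  have hsub : {ω | phiZ (X k ω) = (0, 0)} ∩ P ⊆ {ω | ∃ j ≥ m, X j ω = (0, 0)} := by
    rintro ω ⟨hφ, hω⟩
    simp only [P, Set.mem_iInter, Set.mem_preimage, Set.mem_singleton_iff, Finset.mem_Ico] at hω
    have hpath : ∀ n, X (n + 1) ω = manhattanStepFun (X n ω) (C n ω) := fun n => hXrec n ω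
    have hpar := (even_manhattanPath_iff (x := fun n => X n ω) hpath (hX0 ω) k).2 hk
    rcases eq_zero_or_eq_one_one_of_phiZ_eq_zero hφ hpar with h00 | h11
    · exact ⟨k, hmk, h00⟩
    · exact ⟨k + 4, by omega, manhattanPath_add_four_eq_zero (x := fun n => X n ω) hpath h11
        (by simpa using hω k (by omega)) (by simpa using hω (k + 1) (by omega))
        (by simpa using hω (k + 2) (by omega)) (by simpa using hω (k + 3) (by omega))⟩
  have := measureReal_le_condExp_indicator (G := {ω | phiZ (X k ω) = (0, 0)})
    ((pastFiltration C hC).le k) (iSup₂_le fun i _ => (hC i).comap_le) hind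
    ((measurable_of_countable phiZ).comp (measurable_pastFiltration_manhattan hC hX0 hXrec k)
      (measurableSet_singleton _)) hP
    ((iSup_le (pastFiltration C hC).le) _ (measurableSet_exists_ge_eq_zero hC hX0 hXrec m)) hsub
  rwa [hPreal] at this

lemma ae_exists_ge_eq_zero_of_frequently_phiZ [IsProbabilityMeasure μ] (hCindep : iIndepFun C μ)
    (hCfair : ∀ n, μ {ω | C n ω = true} = 2⁻¹) (m : ℕ) :
    ∀ᵐ ω ∂μ, (∃ᶠ k in atTop, Even k ∧ phiZ (X k ω) = (0, 0)) → ∃ j ≥ m, X j ω = (0, 0) := by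
  have hbound : ∀ᵐ ω ∂μ, ∀ k, m ≤ k → Even k → phiZ (X k ω) = (0, 0) →
      (16⁻¹ : ℝ) ≤ μ[{ω | ∃ j ≥ m, X j ω = (0, 0)}.indicator 1 | pastFiltration C hC k] ω := by
    refine ae_all_iff.2 fun k => ?_
    by_cases hk : m ≤ k ∧ Even k
    · filter_upwards [inv_sixteen_le_condExp_indicator_visit hC hX0 hXrec hCindep hCfair hk.1 hk.2]
        with ω hω _ _ using hω
    · exact ae_of_all _ fun ω hmk hk' => absurd ⟨hmk, hk'⟩ hk
  filter_upwards [ae_mem_of_frequently_le_condExp_indicator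
    (measurableSet_exists_ge_eq_zero hC hX0 hXrec m) (by norm_num : (0 : ℝ) < 16⁻¹), hbound]
    with ω hlevy hω hfreq
  exact hlevy ((hfreq.and_eventually (eventually_ge_atTop m)).mono
    fun k ⟨⟨hk, hφ⟩, hmk⟩ => hω k hmk hk hφ)

end ManhattanWalk

/-- If the projected walk `Yₙ = φ(X_{2n})` visits the origin infinitely often a.s.,
then the Manhattan walk `X` itself visits the origin infinitely often a.s. -/
theorem manhattan_recurrence_from_projection
    {Ω : Type*} [MeasurableSpace Ω] (μ : Measure Ω) [IsProbabilityMeasure μ]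
    (C : ℕ → Ω → Bool) (hCmeas : ∀ n, Measurable (C n))
    (hCindep : iIndepFun C μ)
    (hCfair : ∀ n, μ {ω | C n ω = true} = 2⁻¹)
    (X : ℕ → Ω → ℤ × ℤ)
    (hX0 : ∀ ω, X 0 ω = (0, 0))
    (hXrec : ∀ n ω, X (n + 1) ω = manhattanStepFun (X n ω) (C n ω))
    (hY : μ {ω | {n : ℕ | phiZ (X (2 * n) ω) = (0, 0)}.Infinite} = 1) :
    μ {ω | {m : ℕ | X m ω = (0, 0)}.Infinite} = 1 := by
  have hvisit :=
    ae_all_iff.2 (ae_exists_ge_eq_zero_of_frequently_phiZ hCmeas hX0 hXrec hCindep hCfair)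
  have hinf : ∀ᵐ ω ∂μ, {n : ℕ | phiZ (X (2 * n) ω) = (0, 0)}.Infinite →
      {m : ℕ | X m ω = (0, 0)}.Infinite := by
    filter_upwards [hvisit] with ω hω hYω
    have hfreq : ∃ᶠ k in atTop, Even k ∧ phiZ (X k ω) = (0, 0) :=
      (tendsto_id.const_mul_atTop' two_pos).frequently_map _
        (fun n hn => ⟨even_two_mul n, hn⟩) (Nat.frequently_atTop_iff_infinite.2 hYω)
    exact Nat.frequently_atTop_iff_infinite.1 (frequently_atTop.2 fun m => hω m hfreq)
  exact le_antisymm prob_le_one (hY ▸ measure_mono_ae hinf)
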